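/- arXiv:2411.12599 — 5 statements merged into one kernel-verified Lean document; each statement's English description precedes it below -/
import Mathlib

section
/- Let G be a connected graph on p ≥ 3 vertices. If u and v are any two adjacent vertices in the central graph C[G], then there exists a third vertex w in C[G] that is adjacent to neither u nor v. -/
/-! Adjacent vertices of `C[G]` are either two distinct non-adjacent vertices `a, b` of `G`, or a
vertex `a` and an edge `e ∋ a`. In the first case a shortest `a`–`b` path has length at least 2,
so its first two edges give either a common neighbour of `a` and `b` or an edge avoiding both.
In the second case a vertex `c ∉ e` has a neighbour `d`: either `d = a`, and `c` is a neighbour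
of `a` outside `e`, or the edge `cd` avoids `a`; no two edges are adjacent in `C[G]`. -/

open Finset

namespace EccPaper

variable {V : Type*}

noncomputable def ecc [Fintype V] (G : SimpleGraph V) (v : V) : ℕ :=
  Finset.univ.sup (fun u => G.dist v u)

noncomputable def graphDiam [Fintype V] (G : SimpleGraph V) : ℕ :=
  Finset.univ.sup (fun v => ecc G v)

noncomputable def eccMatR [Fintype V] (G : SimpleGraph V) : Matrix V V ℝ :=
  fun u v => if G.dist u v = min (ecc G u) (ecc G v) then (G.dist u v : ℝ) else 0

noncomputable def eccWiener [Fintype V] (G : SimpleGraph V) : ℝ :=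
  (∑ u, ∑ v, eccMatR G u v) / 2

noncomputable def totalEcc [Fintype V] (G : SimpleGraph V) : ℝ :=
  ∑ v, (ecc G v : ℝ)

noncomputable def eccConnIndex [Fintype V] (G : SimpleGraph V) [DecidableRel G.Adj] : ℝ :=
  ∑ v, (G.degree v : ℝ) * (ecc G v : ℝ)

lemma eccMatR_isHermitian [Fintype V] (G : SimpleGraph V) : (eccMatR G).IsHermitian := by
  ext i j
  simp only [eccMatR, Matrix.conjTranspose_apply, starRingEnd_apply, star_trivial]
  rw [SimpleGraph.dist_comm, min_comm]

noncomputable def eccEnergy [Fintype V] [DecidableEq V] (G : SimpleGraph V) : ℝ :=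
  ∑ i, |(eccMatR_isHermitian G).eigenvalues i|

noncomputable def eccSpecRadius [Fintype V] [DecidableEq V] (G : SimpleGraph V) : ℝ :=
  ⨆ i, |(eccMatR_isHermitian G).eigenvalues i|

def eccGraph [Fintype V] (G : SimpleGraph V) : SimpleGraph V where
  Adj u v := u ≠ v ∧ G.dist u v = min (ecc G u) (ecc G v)
  symm := by
    constructor
    rintro u v ⟨h1, h2⟩
    exact ⟨h1.symm, by rwa [SimpleGraph.dist_comm, min_comm]⟩
  loopless := ⟨fun v h => h.1 rfl⟩

def IsIrreducible [Fintype V] (M : Matrix V V ℝ) : Prop :=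
  ¬ ∃ S : Set V, S.Nonempty ∧ S ≠ Set.univ ∧ ∀ i ∈ S, ∀ j ∉ S, M i j = 0

def centralGraph [DecidableEq V] (G : SimpleGraph V) [DecidableRel G.Adj] :
    SimpleGraph (V ⊕ G.edgeSet) where
  Adj x y :=
    match x, y with
    | Sum.inl u, Sum.inl v => u ≠ v ∧ ¬ G.Adj u v
    | Sum.inl u, Sum.inr e => u ∈ (e : Sym2 V)
    | Sum.inr e, Sum.inl u => u ∈ (e : Sym2 V)
    | Sum.inr _, Sum.inr _ => False
  symm := by
    constructor
    rintro (u | e) (v | f) h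
    · exact ⟨h.1.symm, fun hadj => h.2 hadj.symm⟩
    · exact h
    · exact h
    · exact h
  loopless := by
    constructor
    rintro (u | e) h
    · exact h.1 rfl
    · exact h

section

variable {G : SimpleGraph V}

theorem _root_.SimpleGraph.Connected.commonNeighbors_nonempty_or_exists_edge_avoiding
    (hG : G.Connected) {a b : V} (hne : a ≠ b) (hab : ¬G.Adj a b) :
    (G.commonNeighbors a b).Nonempty ∨ ∃ e ∈ G.edgeSet, a ∉ e ∧ b ∉ e := by
  obtain ⟨p, hp⟩ := hG.exists_walk_length_eq_dist a b
  match p with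
  | .nil => exact absurd rfl hne
  | .cons hadj .nil => exact absurd hadj hab
  | .cons (v := c) hac (.cons (v := d) hcd q) =>
    by_cases hcb : G.Adj c b
    · exact .inl ⟨c, hac, hcb.symm⟩
    refine .inr ⟨s(c, d), hcd, ?_, ?_⟩ <;> rw [Sym2.mem_iff, not_or]
    · refine ⟨hac.ne, ?_⟩
      rintro rfl
      have := G.dist_le q
      simp only [SimpleGraph.Walk.length_cons] at hp
      omega
    · exact ⟨by rintro rfl; exact hab hac, by rintro rfl; exact hcb hcd⟩

theorem _root_.SimpleGraph.Connected.exists_adj_outside_or_exists_edge_avoiding [Fintype V]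
    (hG : G.Connected) (hcard : 3 ≤ Fintype.card V) (a b : V) :
    (∃ c, c ≠ a ∧ c ≠ b ∧ G.Adj c a) ∨ ∃ e ∈ G.edgeSet, a ∉ e := by
  have : Nontrivial V := Fintype.one_lt_card_iff_nontrivial.mp (by omega)
  obtain ⟨c, hca, hcb⟩ :=
    ENat.exists_ne_ne_of_three_le (by simpa [ENat.card_eq_coe_fintype_card] using hcard) a b
  obtain ⟨d, hcd⟩ := hG.preconnected.exists_adj_of_nontrivial c
  by_cases hda : d = a
  · exact .inl ⟨c, hca, hcb, hda ▸ hcd⟩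
  · exact .inr ⟨s(c, d), hcd, by simp [Ne.symm hca, Ne.symm hda]⟩

end

def HasCommonNonNeighbor {W : Type*} (H : SimpleGraph W) (u v : W) : Prop :=
  ∃ w, w ≠ u ∧ w ≠ v ∧ ¬H.Adj w u ∧ ¬H.Adj w v

theorem HasCommonNonNeighbor.symm {W : Type*} {H : SimpleGraph W} {u v : W}
    (h : HasCommonNonNeighbor H u v) : HasCommonNonNeighbor H v u :=
  let ⟨w, hwu, hwv, hadju, hadjv⟩ := h
  ⟨w, hwv, hwu, hadjv, hadju⟩

section centralGraph

variable [DecidableEq V] {G : SimpleGraph V} [DecidableRel G.Adj]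

@[simp]
theorem centralGraph_adj_inl_inl {u v : V} :
    (centralGraph G).Adj (.inl u) (.inl v) ↔ u ≠ v ∧ ¬G.Adj u v :=
  Iff.rfl

@[simp]
theorem centralGraph_adj_inl_inr {u : V} {e : G.edgeSet} :
    (centralGraph G).Adj (.inl u) (.inr e) ↔ u ∈ (e : Sym2 V) :=
  Iff.rfl

@[simp]
theorem centralGraph_adj_inr_inl {e : G.edgeSet} {u : V} :
    (centralGraph G).Adj (.inr e) (.inl u) ↔ u ∈ (e : Sym2 V) :=
  Iff.rfl

@[simp]
theorem centralGraph_not_adj_inr_inr {e f : G.edgeSet} : ¬(centralGraph G).Adj (.inr e) (.inr f) :=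
  id

theorem hasCommonNonNeighbor_centralGraph_inl_inl (hG : G.Connected) {a b : V}
    (hadj : (centralGraph G).Adj (.inl a) (.inl b)) :
    HasCommonNonNeighbor (centralGraph G) (.inl a) (.inl b) := by
  rw [centralGraph_adj_inl_inl] at hadj
  obtain ⟨c, hac, hbc⟩ | ⟨e, he, hae, hbe⟩ :=
    hG.commonNeighbors_nonempty_or_exists_edge_avoiding hadj.1 hadj.2
  · refine ⟨.inl c, by simp [hac.ne'], by simp [hbc.ne'], ?_, ?_⟩ <;> simp [hac.symm, hbc.symm]
  · exact ⟨.inr ⟨e, he⟩, by simp, by simp, hae, hbe⟩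

theorem hasCommonNonNeighbor_centralGraph_inl_inr [Fintype V] (hG : G.Connected)
    (hcard : 3 ≤ Fintype.card V) {a : V} {e : G.edgeSet}
    (hadj : (centralGraph G).Adj (.inl a) (.inr e)) :
    HasCommonNonNeighbor (centralGraph G) (.inl a) (.inr e) := by
  obtain ⟨b, hab⟩ := Sym2.mem_iff_exists.mp hadj
  obtain ⟨c, hca, hcb, hcadj⟩ | ⟨f, hf, haf⟩ :=
    hG.exists_adj_outside_or_exists_edge_avoiding hcard a b
  · refine ⟨.inl c, by simp [hca], by simp, ?_, ?_⟩ <;> simp [hab, hca, hcb, hcadj]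
  · refine ⟨.inr ⟨f, hf⟩, by simp, ?_, haf, by simp⟩
    rintro ⟨⟩
    exact haf hadj

end centralGraph

/-- In the central graph of a connected graph on ≥3 vertices, any two
adjacent vertices have a third vertex adjacent to neither of them. -/
theorem stmt_0 {V : Type*} [Fintype V] [DecidableEq V] (G : SimpleGraph V) [DecidableRel G.Adj]
    (hconn : G.Connected) (hp : 3 ≤ Fintype.card V)
    (u v : V ⊕ G.edgeSet) (huv : (centralGraph G).Adj u v) :
    ∃ w : V ⊕ G.edgeSet, w ≠ u ∧ w ≠ v ∧ ¬ (centralGraph G).Adj w u ∧ ¬ (centralGraph G).Adj w v := by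
  change HasCommonNonNeighbor (centralGraph G) u v
  match u, v with
  | .inl a, .inl b => exact hasCommonNonNeighbor_centralGraph_inl_inl hconn huv
  | .inl a, .inr e => exact hasCommonNonNeighbor_centralGraph_inl_inr hconn hp huv
  | .inr e, .inl a => exact (hasCommonNonNeighbor_centralGraph_inl_inr hconn hp huv.symm).symm
  | .inr e, .inr f => exact absurd huv centralGraph_not_adj_inr_inr

end EccPaper
end

section
/- Let G be a connected triangle-free graph. Then the eccentric graph of the central graph C[G] is connected; equivalently, the eccentricity matrix of C[G] is irreducible. -/
/-! When `G` is triangle-free, every original vertex of `C[G]` has eccentricity at most two, so it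
is adjacent in the eccentric graph to every vertex at distance two from it: to its `G`-neighbours
and to the subdivision vertices of the edges it does not lie on. The original vertices are thus
connected in the eccentric graph along the walks of `G`, and each subdivision vertex is attached
to them (for `G = K₂` through an endpoint, the subdivision vertex being the centre of the path
`C[K₂]`). Each edge `xy` of the eccentric graph gives a positive entry `d(x, y)` of the
eccentricity matrix, so no proper nonempty set of indices is closed. -/

open Finset

namespace EccPaper

variable {V : Type*}

section Eccentricity

variable {W : Type*} [Fintype W] {H : SimpleGraph W}

lemma dist_le_ecc (x y : W) : H.dist x y ≤ ecc H x :=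
  Finset.le_sup (Finset.mem_univ y)

lemma ecc_le_iff {x : W} {n : ℕ} : ecc H x ≤ n ↔ ∀ y, H.dist x y ≤ n := by
  simp [ecc]

/-- `ecc H y ≥ H.dist y x = ecc H x`, so the minimum defining `eccGraph` is attained at `x`. -/
lemma eccGraph_adj_of_dist_eq_ecc {x y : W} (hne : x ≠ y) (h : H.dist x y = ecc H x) :
    (eccGraph H).Adj x y := by
  have hy : ecc H x ≤ ecc H y := h ▸ H.dist_comm ▸ dist_le_ecc y x
  exact ⟨hne, by rw [min_eq_left hy, h]⟩

lemma isIrreducible_eccMatR (hH : H.Connected) (hE : (eccGraph H).Connected) :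
    IsIrreducible (eccMatR H) := by
  rintro ⟨S, ⟨i, hi⟩, hS, hzero⟩
  obtain ⟨j, hj⟩ : ∃ j, j ∉ S := by
    by_contra! h
    exact hS (Set.eq_univ_of_forall h)
  obtain ⟨⟨⟨a, b⟩, hab⟩, -, ha, hb⟩ := (hE i j).some.exists_boundary_dart S hi hj
  have hentry := hzero a ha b hb
  rw [eccMatR, if_pos hab.2] at hentry
  exact (hH.pos_dist_of_ne hab.1).ne' (by exact_mod_cast hentry)

end Eccentricity

section CentralGraph

variable [DecidableEq V] {G : SimpleGraph V} [DecidableRel G.Adj]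

open SimpleGraph

lemma exists_walk_inl_inl_length_le_two (u v : V) :
    ∃ p : (centralGraph G).Walk (.inl u) (.inl v), p.length ≤ 2 := by
  by_cases huv : u = v
  · subst huv
    exact ⟨.nil, by simp⟩
  by_cases hadj : G.Adj u v
  · let e : G.edgeSet := ⟨s(u, v), hadj⟩
    have hu : (centralGraph G).Adj (.inl u) (.inr e) := Sym2.mem_mk_left u v
    have hv : (centralGraph G).Adj (.inr e) (.inl v) := Sym2.mem_mk_right u v
    exact ⟨.cons hu (.cons hv .nil), by simp⟩
  · exact ⟨(show (centralGraph G).Adj (.inl u) (.inl v) from ⟨huv, hadj⟩).toWalk, by simp⟩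

/-- In a triangle-free graph, a vertex off an edge is non-adjacent to one of its endpoints,
which gives a path of length two in the central graph. -/
lemma exists_walk_inl_inr_length_le_two (htf : G.CliqueFree 3) (u : V) (e : G.edgeSet) :
    ∃ p : (centralGraph G).Walk (.inl u) (.inr e), p.length ≤ 2 := by
  by_cases hue : u ∈ (e : Sym2 V)
  · exact ⟨(show (centralGraph G).Adj (.inl u) (.inr e) from hue).toWalk, by simp⟩
  obtain ⟨⟨a, b⟩, hab⟩ := e
  have hua : u ≠ a := fun h => hue (h ▸ Sym2.mem_mk_left u b)
  have hub : u ≠ b := fun h => hue (h ▸ Sym2.mem_mk_right a u)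
  have hnot : ¬ G.Adj u a ∨ ¬ G.Adj u b := by
    by_contra! h
    exact htf {u, a, b} (is3Clique_triple_iff.mpr ⟨h.1, h.2, hab⟩)
  rcases hnot with hna | hnb
  · have h1 : (centralGraph G).Adj (.inl u) (.inl a) := ⟨hua, hna⟩
    have h2 : (centralGraph G).Adj (.inl a) (.inr ⟨s(a, b), hab⟩) := Sym2.mem_mk_left a b
    exact ⟨.cons h1 (.cons h2 .nil), by simp⟩
  · have h1 : (centralGraph G).Adj (.inl u) (.inl b) := ⟨hub, hnb⟩
    have h2 : (centralGraph G).Adj (.inl b) (.inr ⟨s(a, b), hab⟩) := Sym2.mem_mk_right a b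
    exact ⟨.cons h1 (.cons h2 .nil), by simp⟩

lemma centralGraph_connected [Nonempty V] : (centralGraph G).Connected := by
  have hinl (u v : V) : (centralGraph G).Reachable (.inl u) (.inl v) :=
    let ⟨p, _⟩ := exists_walk_inl_inl_length_le_two u v; ⟨p⟩
  refine (connected_iff_exists_forall_reachable _).mpr ⟨.inl (Classical.arbitrary V), ?_⟩
  rintro (v | e)
  · exact hinl _ v
  · have hend : (centralGraph G).Adj (.inl (e : Sym2 V).out.1) (.inr e) := Sym2.out_fst_mem _
    exact (hinl _ _).trans hend.reachable

variable [Fintype V]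

lemma ecc_centralGraph_inl_le_two (htf : G.CliqueFree 3) (u : V) :
    ecc (centralGraph G) (.inl u) ≤ 2 := by
  rw [ecc_le_iff]
  rintro (v | e)
  · obtain ⟨p, hp⟩ := exists_walk_inl_inl_length_le_two (G := G) u v
    exact (dist_le p).trans hp
  · obtain ⟨p, hp⟩ := exists_walk_inl_inr_length_le_two htf u e
    exact (dist_le p).trans hp

lemma eccGraph_centralGraph_adj_inl (htf : G.CliqueFree 3) {u : V} {y : V ⊕ G.edgeSet}
    (hne : .inl u ≠ y) (hnadj : ¬ (centralGraph G).Adj (.inl u) y) :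
    (eccGraph (centralGraph G)).Adj (.inl u) y := by
  have : Nonempty V := ⟨u⟩
  have hdist := centralGraph_connected.one_lt_dist_of_ne_of_not_adj hne hnadj
  have hecc := ecc_centralGraph_inl_le_two htf u
  have hle := dist_le_ecc (H := centralGraph G) (.inl u) y
  exact eccGraph_adj_of_dist_eq_ecc hne (by omega)

/-- If both vertices of `G` lie on the edge `e`, then `G` is a single edge and the central graph
is the path `a - e - b`, in which `e` has eccentricity one. -/
lemma eccGraph_centralGraph_adj_inr_of_forall_mem {e : G.edgeSet} (hall : ∀ w, w ∈ (e : Sym2 V))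
    {a : V} (ha : a ∈ (e : Sym2 V)) :
    (eccGraph (centralGraph G)).Adj (.inr e) (.inl a) := by
  have hdist : (centralGraph G).dist (.inr e) (.inl a) = 1 := dist_eq_one_iff_adj.mpr ha
  have hecc : ecc (centralGraph G) (.inr e) ≤ 1 := by
    rw [ecc_le_iff]
    rintro (w | ⟨⟨c, d⟩, hcd⟩)
    · exact (dist_eq_one_iff_adj.mpr (hall w)).le
    · have hf : (⟨s(c, d), hcd⟩ : G.edgeSet) = e := Subtype.ext <|
        Sym2.eq_of_ne_mem (G.ne_of_adj hcd) (Sym2.mem_mk_left c d) (Sym2.mem_mk_right c d)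
          (hall c) (hall d)
      simp [hf]
  have hle := dist_le_ecc (H := centralGraph G) (.inr e) (.inl a)
  exact eccGraph_adj_of_dist_eq_ecc (by simp) (by omega)

lemma exists_eccGraph_centralGraph_adj_inr (htf : G.CliqueFree 3) (e : G.edgeSet) :
    ∃ a, (eccGraph (centralGraph G)).Adj (.inr e) (.inl a) := by
  by_cases hall : ∀ w, w ∈ (e : Sym2 V)
  · exact ⟨_, eccGraph_centralGraph_adj_inr_of_forall_mem hall (Sym2.out_fst_mem _)⟩
  · push Not at hall
    obtain ⟨w, hw⟩ := hall
    exact ⟨w, (eccGraph_centralGraph_adj_inl htf (y := .inr e) (by simp) hw).symm⟩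

lemma eccGraph_centralGraph_connected (hconn : G.Connected) (htf : G.CliqueFree 3) :
    (eccGraph (centralGraph G)).Connected := by
  have hinl (u v : V) : (eccGraph (centralGraph G)).Reachable (.inl u) (.inl v) := by
    obtain ⟨p⟩ := hconn u v
    induction p with
    | nil => rfl
    | cons hadj _ ih =>
      have hnadj : ¬ (centralGraph G).Adj (.inl _) (.inl _) := fun h => h.2 hadj
      exact (eccGraph_centralGraph_adj_inl htf (by simpa using hadj.ne) hnadj).reachable.trans ih
  have : Nonempty V := hconn.nonempty
  refine (connected_iff_exists_forall_reachable _).mpr ⟨.inl (Classical.arbitrary V), ?_⟩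
  rintro (v | e)
  · exact hinl _ v
  · obtain ⟨a, ha⟩ := exists_eccGraph_centralGraph_adj_inr htf e
    exact (hinl _ a).trans ha.symm.reachable

end CentralGraph

/-- for connected triangle-free G, the eccentric graph of C[G] is connected,
equivalently the eccentricity matrix of C[G] is irreducible. -/
theorem stmt_3 {V : Type*} [Fintype V] [DecidableEq V] (G : SimpleGraph V) [DecidableRel G.Adj]
    (hconn : G.Connected) (htf : G.CliqueFree 3) :
    (eccGraph (centralGraph G)).Connected ∧ IsIrreducible (eccMatR (centralGraph G)) := by
  have : Nonempty V := hconn.nonempty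
  have hE := eccGraph_centralGraph_connected hconn htf
  exact ⟨hE, isIrreducible_eccMatR centralGraph_connected hE⟩

end EccPaper
end

section
/- Let G be a connected graph on p vertices and q edges of diameter 2 that is not self-centered, and let l be the number of vertices of eccentricity 1. Then the eccentricity Wiener index of G equals p(p-1) - 2q + (l/2)(2p - l - 1). -/
/-! In a connected graph of diameter at most 2, an off-diagonal entry of the eccentricity matrix is
1 when one endpoint has eccentricity 1 (the two are then adjacent), and otherwise 2 or 0 according
as the endpoints are adjacent or not. Hence `ε(G)` is twice the indicator of non-adjacency plus the
indicator of the pairs `u ≠ v` meeting the set of the `l` vertices of eccentricity 1, and counting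
the ordered pairs of each kind gives the formula. -/

open Finset

namespace EccPaper

variable {V : Type*}

section Counting

variable {α : Type*} [Fintype α] [DecidableEq α]

theorem sum_ite_ne_left (u : α) :
    ∑ v, (if u ≠ v then (1 : ℝ) else 0) = Fintype.card α - 1 := by
  rw [Finset.sum_boole, filter_ne, card_erase_of_mem (mem_univ u), card_univ,
    Nat.cast_pred (Fintype.card_pos_iff.mpr ⟨u⟩)]

theorem sum_sum_ite_ne_and_or (P : α → Prop) [DecidablePred P] :
    ∑ u, ∑ v, (if u ≠ v ∧ (P u ∨ P v) then (1 : ℝ) else 0) =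
      #{v | P v} * (2 * Fintype.card α - #{v | P v} - 1) := by
  have row : ∀ u, ∑ v, (if u ≠ v ∧ (P u ∨ P v) then (1 : ℝ) else 0) =
      if P u then (Fintype.card α : ℝ) - 1 else #{v | P v} := by
    intro u
    by_cases hu : P u
    · simp only [hu, true_or, and_true, if_true, sum_ite_ne_left]
    · simp only [hu, false_or, if_false, Finset.sum_boole]
      congr 2
      exact filter_congr fun v _ => ⟨And.right, fun h => ⟨fun huv => hu (huv ▸ h), h⟩⟩
  have hcompl : (#{v | ¬ P v} : ℝ) = Fintype.card α - #{v | P v} := by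
    rw [eq_sub_iff_add_eq, ← Nat.cast_add, add_comm, card_filter_add_card_filter_not, card_univ]
  simp only [row, Finset.sum_ite, sum_const, nsmul_eq_mul, hcompl]
  ring

end Counting

theorem sum_sum_ite_adj [Fintype V] (G : SimpleGraph V) [DecidableRel G.Adj] :
    ∑ u, ∑ v, (if G.Adj u v then (1 : ℝ) else 0) = 2 * #G.edgeFinset := by
  classical
  simp only [Finset.sum_boole, ← SimpleGraph.neighborFinset_eq_filter,
    SimpleGraph.card_neighborFinset_eq_degree]
  exact_mod_cast G.sum_degrees_eq_twice_card_edges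

section Eccentricity

variable [Fintype V] {G : SimpleGraph V}

theorem dist_le_ecc_s6 (u v : V) : G.dist u v ≤ ecc G u :=
  le_sup (f := fun v => G.dist u v) (mem_univ v)

theorem ecc_le_graphDiam (v : V) : ecc G v ≤ graphDiam G :=
  le_sup (f := fun v => ecc G v) (mem_univ v)

theorem one_le_ecc_of_ne (hconn : G.Connected) {u v : V} (huv : u ≠ v) : 1 ≤ ecc G u :=
  (hconn.pos_dist_of_ne huv).trans_le (dist_le_ecc_s6 u v)

theorem adj_of_ecc_eq_one (hconn : G.Connected) {u v : V} (hu : ecc G u = 1) (huv : u ≠ v) :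
    G.Adj u v := by
  rw [← SimpleGraph.dist_eq_one_iff_adj]
  have := hconn.pos_dist_of_ne huv
  have := dist_le_ecc_s6 (G := G) u v
  omega

theorem adj_of_ecc_eq_one_or (hconn : G.Connected) {u v : V}
    (h : ecc G u = 1 ∨ ecc G v = 1) (huv : u ≠ v) : G.Adj u v :=
  h.elim (adj_of_ecc_eq_one hconn · huv) fun hv => (adj_of_ecc_eq_one hconn hv huv.symm).symm

theorem eccMatR_self (u : V) : eccMatR G u u = 0 := by
  simp [eccMatR]

variable [DecidableRel G.Adj]

theorem eccMatR_of_ne (hconn : G.Connected) (hd : graphDiam G ≤ 2) {u v : V} (huv : u ≠ v) :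
    eccMatR G u v =
      if ecc G u = 1 ∨ ecc G v = 1 then 1 else if G.Adj u v then 0 else 2 := by
  have hu := one_le_ecc_of_ne hconn huv
  have hv := one_le_ecc_of_ne hconn huv.symm
  have hu2 := (ecc_le_graphDiam (G := G) u).trans hd
  have hv2 := (ecc_le_graphDiam (G := G) v).trans hd
  by_cases h1 : ecc G u = 1 ∨ ecc G v = 1
  · have hadj := adj_of_ecc_eq_one_or hconn h1 huv
    have hmin : min (ecc G u) (ecc G v) = 1 := by omega
    simp [eccMatR, h1, hmin, SimpleGraph.dist_eq_one_iff_adj.mpr hadj]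
  · have hmin : min (ecc G u) (ecc G v) = 2 := by omega
    by_cases hadj : G.Adj u v
    · simp [eccMatR, h1, hadj, hmin, SimpleGraph.dist_eq_one_iff_adj.mpr hadj]
    · have hdist : G.dist u v = 2 := by
        have := hconn.pos_dist_of_ne huv
        have := dist_le_ecc_s6 (G := G) u v
        have := mt SimpleGraph.dist_eq_one_iff_adj.mp hadj
        omega
      simp [eccMatR, h1, hadj, hmin, hdist]

theorem eccMatR_eq_indicators [DecidableEq V] (hconn : G.Connected) (hd : graphDiam G ≤ 2)
    (u v : V) :
    eccMatR G u v = 2 * (if u ≠ v then 1 else 0) - 2 * (if G.Adj u v then 1 else 0) +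
      (if u ≠ v ∧ (ecc G u = 1 ∨ ecc G v = 1) then 1 else 0) := by
  obtain rfl | huv := eq_or_ne u v
  · simp [eccMatR_self]
  rw [eccMatR_of_ne hconn hd huv]
  by_cases h1 : ecc G u = 1 ∨ ecc G v = 1
  · have hadj := adj_of_ecc_eq_one_or hconn h1 huv
    simp [h1, hadj, huv]
  · by_cases hadj : G.Adj u v <;> simp [h1, hadj, huv]

theorem eccWiener_of_graphDiam_le_two (hconn : G.Connected) (hd : graphDiam G ≤ 2) :
    eccWiener G = (Fintype.card V : ℝ) * (Fintype.card V - 1) - 2 * #G.edgeFinset +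
      #{v | ecc G v = 1} / 2 * (2 * Fintype.card V - #{v | ecc G v = 1} - 1) := by
  classical
  have hsum : ∑ u, ∑ v, eccMatR G u v =
      2 * ∑ u : V, ∑ v : V, (if u ≠ v then (1 : ℝ) else 0) -
        2 * ∑ u, ∑ v, (if G.Adj u v then 1 else 0) +
        ∑ u, ∑ v, (if u ≠ v ∧ (ecc G u = 1 ∨ ecc G v = 1) then 1 else 0) := by
    simp only [eccMatR_eq_indicators hconn hd, sum_add_distrib, sum_sub_distrib, mul_sum]
  rw [eccWiener, hsum, sum_sum_ite_adj, sum_sum_ite_ne_and_or]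
  simp only [sum_ite_ne_left, sum_const, card_univ, nsmul_eq_mul]
  ring

end Eccentricity

theorem stmt_6_general {V : Type*} [Fintype V] (G : SimpleGraph V) [DecidableRel G.Adj]
    (hconn : G.Connected) (hd : graphDiam G = 2) :
    eccWiener G = (Fintype.card V : ℝ) * ((Fintype.card V : ℝ) - 1) - 2 * (G.edgeFinset.card : ℝ) +
      ((Finset.univ.filter (fun v : V => ecc G v = 1)).card : ℝ) / 2 *
        (2 * (Fintype.card V : ℝ) - ((Finset.univ.filter (fun v : V => ecc G v = 1)).card : ℝ) - 1) :=
  eccWiener_of_graphDiam_le_two hconn hd.le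

/-- for a non-self-centered graph of diameter 2 with l vertices of
eccentricity 1, W_ε(G) = p(p-1) - 2q + (l/2)(2p - l - 1). -/
theorem stmt_6 {V : Type*} [Fintype V] [DecidableEq V] (G : SimpleGraph V) [DecidableRel G.Adj]
    (hconn : G.Connected) (hd : graphDiam G = 2)
    (hns : ¬ ∀ v : V, ecc G v = graphDiam G) :
    eccWiener G = (Fintype.card V : ℝ) * ((Fintype.card V : ℝ) - 1) - 2 * (G.edgeFinset.card : ℝ) +
      ((Finset.univ.filter (fun v : V => ecc G v = 1)).card : ℝ) / 2 *
        (2 * (Fintype.card V : ℝ) - ((Finset.univ.filter (fun v : V => ecc G v = 1)).card : ℝ) - 1) :=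
  stmt_6_general G hconn hd

end EccPaper
end

section
/- Let G be a self-centered connected graph on p vertices with diameter d. Then E_ε(G) ≤ 2W_ε(G)/p + sqrt(2(p−1)·W_ε(G)·(d − 2W_ε(G)/p²)), where E_ε(G) is the eccentricity energy. -/
/-!
In a self-centered graph of diameter `d` the eccentricity matrix `ε` has entries in `{0, d}`, so
`∑ λᵢ² = tr ε² = d · ∑ εᵤᵥ = 2dW`, and each row contains an entry `d`, whence `2W ≥ pd`.
The Rayleigh quotient of the all-ones vector gives an eigenvalue `λ ≥ b := 2W/p`, and
Cauchy–Schwarz on the other eigenvalues bounds the energy by `|λ| + √((p - 1)(2dW - λ²))`.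
The map `a ↦ a + √((p - 1)(S - a²))` is decreasing for `pa² ≥ S`; as `2W ≥ pd` says exactly
`pb² ≥ 2dW`, the eigenvalue `λ` may be replaced by `b`.
-/

open Finset

open Matrix

theorem add_sqrt_mul_sub_sq_le_of_le {p S a b : ℝ} (hp : 1 ≤ p) (hb : 0 ≤ b) (hba : b ≤ a)
    (haS : a ^ 2 ≤ S) (hSb : S ≤ p * b ^ 2) :
    a + √((p - 1) * (S - a ^ 2)) ≤ b + √((p - 1) * (S - b ^ 2)) := by
  rcases hba.eq_or_lt with rfl | hlt
  · rfl
  have hq : 0 ≤ p - 1 := by linarith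
  have hab : b ^ 2 < a ^ 2 := pow_lt_pow_left₀ hlt hb two_ne_zero
  have hY (c : ℝ) (hbc : b ^ 2 ≤ c ^ 2) (hcS : c ^ 2 ≤ S) :
      √((p - 1) * (S - c ^ 2)) ^ 2 = (p - 1) * (S - c ^ 2) ∧
        √((p - 1) * (S - c ^ 2)) ≤ (p - 1) * b := by
    have h0 : 0 ≤ (p - 1) * (S - c ^ 2) := mul_nonneg hq (by linarith)
    refine ⟨Real.sq_sqrt h0, Real.sqrt_le_iff.2 ⟨by positivity, ?_⟩⟩
    have := mul_le_mul_of_nonneg_left (show S - c ^ 2 ≤ (p - 1) * b ^ 2 by linarith) hq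
    linarith [show ((p - 1) * b) ^ 2 = (p - 1) * ((p - 1) * b ^ 2) by ring]
  obtain ⟨hYa, hYaq⟩ := hY a hab.le haS
  obtain ⟨hYb, hYbq⟩ := hY b le_rfl (hab.le.trans haS)
  have hYb0 : 0 < √((p - 1) * (S - b ^ 2)) := Real.sqrt_pos.2 (by nlinarith)
  have hYa0 := Real.sqrt_nonneg ((p - 1) * (S - a ^ 2))
  set Ya := √((p - 1) * (S - a ^ 2))
  set Yb := √((p - 1) * (S - b ^ 2))
  -- `Yb ^ 2 - Ya ^ 2 = (p - 1) (a - b) (a + b)`, while `Ya + Yb ≤ 2 (p - 1) b ≤ (p - 1) (a + b)`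
  have : (a - b) * (Ya + Yb) ≤ (Yb - Ya) * (Ya + Yb) := by
    nlinarith [mul_le_mul_of_nonneg_left (add_le_add hYaq hYbq) (sub_nonneg.2 hlt.le),
      mul_nonneg (mul_nonneg hq (sub_nonneg.2 hlt.le)) (sub_nonneg.2 hlt.le)]
  nlinarith [le_of_mul_le_mul_right this (by positivity)]

theorem Finset.sum_abs_le_abs_add_sqrt {ι : Type*} [DecidableEq ι] (s : Finset ι) (f : ι → ℝ)
    {i : ι} (hi : i ∈ s) :
    ∑ j ∈ s, |f j| ≤ |f i| + √((#s - 1) * (∑ j ∈ s, f j ^ 2 - f i ^ 2)) := by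
  rw [← add_sum_erase s _ hi]
  gcongr
  refine Real.le_sqrt_of_sq_le ?_
  calc (∑ j ∈ s.erase i, |f j|) ^ 2 ≤ #(s.erase i) * ∑ j ∈ s.erase i, |f j| ^ 2 :=
        sq_sum_le_card_mul_sum_sq
    _ = (#s - 1) * (∑ j ∈ s, f j ^ 2 - f i ^ 2) := by
        simp only [sq_abs, sum_erase_eq_sub hi, card_erase_of_mem hi,
          Nat.cast_sub (card_pos.2 ⟨i, hi⟩), Nat.cast_one]

theorem sum_abs_le_add_sqrt_of_le_abs {ι : Type*} [Fintype ι] (x : ι → ℝ) {i : ι} {b : ℝ}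
    (hb : 0 ≤ b) (hbi : b ≤ |x i|) (hS : ∑ j, x j ^ 2 ≤ Fintype.card ι * b ^ 2) :
    ∑ j, |x j| ≤ b + √((Fintype.card ι - 1) * (∑ j, x j ^ 2 - b ^ 2)) := by
  classical
  have hxi : |x i| ^ 2 ≤ ∑ j, x j ^ 2 := by
    simpa only [sq_abs] using single_le_sum (fun j _ => sq_nonneg (x j)) (mem_univ i)
  have hp : (1 : ℝ) ≤ Fintype.card ι := by exact_mod_cast Fintype.card_pos_iff.2 ⟨i⟩
  calc ∑ j, |x j| ≤ |x i| + √((Fintype.card ι - 1) * (∑ j, x j ^ 2 - |x i| ^ 2)) := by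
        simpa only [sq_abs, card_univ] using sum_abs_le_abs_add_sqrt univ x (mem_univ i)
    _ ≤ b + √((Fintype.card ι - 1) * (∑ j, x j ^ 2 - b ^ 2)) :=
        add_sqrt_mul_sub_sq_le_of_le hp hb hbi hxi hS

namespace Matrix.IsHermitian

variable {n : Type*} [Fintype n] [DecidableEq n] {A : Matrix n n ℝ}

theorem trace_mul_self_eq_sum_sq_eigenvalues (hA : A.IsHermitian) :
    (A * A).trace = ∑ i, hA.eigenvalues i ^ 2 := by
  set U : Matrix n n ℝ := ↑hA.eigenvectorUnitary
  set D : Matrix n n ℝ := diagonal (RCLike.ofReal ∘ hA.eigenvalues)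
  have hUU : star U * U = 1 := Unitary.coe_star_mul_self _
  calc (A * A).trace = (U * (D * D) * star U).trace := by
        rw [hA.spectral_theorem, ← map_mul, Unitary.conjStarAlgAut_apply]
    _ = (D * D).trace := by rw [trace_mul_cycle, ← mul_assoc, hUU, one_mul]
    _ = ∑ i, hA.eigenvalues i ^ 2 := by simp [D, diagonal_mul_diagonal, trace_diagonal, sq]

open scoped MatrixOrder in
theorem dotProduct_mulVec_le (hA : A.IsHermitian) {t : ℝ} (ht : ∀ i, hA.eigenvalues i ≤ t)
    (x : n → ℝ) : x ⬝ᵥ A *ᵥ x ≤ t * (x ⬝ᵥ x) := by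
  have hle : A ≤ algebraMap ℝ _ t := le_algebraMap_of_spectrum_le (by
    rw [hA.spectrum_real_eq_range_eigenvalues]
    rintro _ ⟨i, rfl⟩
    exact ht i)
  simpa [Algebra.algebraMap_eq_smul_one, sub_mulVec, smul_mulVec, dotProduct_sub] using
    (le_iff.1 hle).dotProduct_mulVec_nonneg x

theorem sum_abs_eigenvalues_le [Nonempty n] (hA : A.IsHermitian) {b : ℝ} (hb : 0 ≤ b)
    (hbA : Fintype.card n * b ≤ ∑ i, ∑ j, A i j) (htr : (A * A).trace ≤ Fintype.card n * b ^ 2) :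
    ∑ i, |hA.eigenvalues i| ≤ b + √((Fintype.card n - 1) * ((A * A).trace - b ^ 2)) := by
  obtain ⟨i, hi⟩ := Finite.exists_max hA.eigenvalues
  have hRayleigh := hA.dotProduct_mulVec_le hi 1
  have hsum : (1 : n → ℝ) ⬝ᵥ A *ᵥ 1 = ∑ i, ∑ j, A i j := by simp [dotProduct, mulVec]
  have hcard : (1 : n → ℝ) ⬝ᵥ 1 = Fintype.card n := by simp [dotProduct]
  have hbi : b ≤ hA.eigenvalues i := by
    rw [hsum, hcard] at hRayleigh
    have hp : (0 : ℝ) < Fintype.card n := by exact_mod_cast Fintype.card_pos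
    exact le_of_mul_le_mul_left (by linarith) hp
  rw [hA.trace_mul_self_eq_sum_sq_eigenvalues] at htr ⊢
  exact sum_abs_le_add_sqrt_of_le_abs _ hb (hbi.trans (le_abs_self _)) htr

end Matrix.IsHermitian

namespace EccPaper

variable {V : Type*} [Fintype V] {G : SimpleGraph V}

theorem eccMatR_nonneg (u v : V) : 0 ≤ eccMatR G u v := by
  unfold eccMatR
  split_ifs <;> positivity

theorem eccMatR_eq_of_selfCentered (hsc : ∀ v, ecc G v = graphDiam G) (u v : V) :
    eccMatR G u v = if G.dist u v = graphDiam G then (graphDiam G : ℝ) else 0 := by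
  simp only [eccMatR, hsc, min_self]
  split_ifs with h
  · rw [h]
  · rfl

theorem card_mul_graphDiam_le_sum_eccMatR (hsc : ∀ v, ecc G v = graphDiam G) :
    Fintype.card V * (graphDiam G : ℝ) ≤ ∑ u, ∑ v, eccMatR G u v := by
  rw [← nsmul_eq_mul, ← card_univ, ← sum_const]
  refine sum_le_sum fun u _ => ?_
  obtain ⟨v, -, hv⟩ := exists_mem_eq_sup univ ⟨u, mem_univ u⟩ (G.dist u ·)
  have hdist : G.dist u v = graphDiam G := hv ▸ hsc u
  calc (graphDiam G : ℝ) = eccMatR G u v := by rw [eccMatR_eq_of_selfCentered hsc, if_pos hdist]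
    _ ≤ ∑ w, eccMatR G u w := single_le_sum (fun w _ => eccMatR_nonneg u w) (mem_univ v)

theorem trace_eccMatR_mul_self (hsc : ∀ v, ecc G v = graphDiam G) :
    (eccMatR G * eccMatR G).trace = 2 * graphDiam G * eccWiener G := by
  have hsq (u v : V) : eccMatR G u v * eccMatR G v u = graphDiam G * eccMatR G u v := by
    rw [← (eccMatR_isHermitian G).apply u v, star_trivial, eccMatR_eq_of_selfCentered hsc]
    split_ifs <;> ring
  simp only [trace, Matrix.diag, mul_apply, hsq, ← mul_sum, eccWiener]
  ring

/-- eccentricity energy bound for self-centered graphs. -/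
theorem stmt_14 {V : Type*} [Fintype V] [DecidableEq V] (G : SimpleGraph V)
    (hconn : G.Connected) (hsc : ∀ v : V, ecc G v = graphDiam G) :
    eccEnergy G ≤ 2 * eccWiener G / (Fintype.card V : ℝ) +
      Real.sqrt (2 * ((Fintype.card V : ℝ) - 1) * eccWiener G *
        ((graphDiam G : ℝ) - 2 * eccWiener G / (Fintype.card V : ℝ) ^ 2)) := by
  have : Nonempty V := hconn.nonempty
  have hp : (0 : ℝ) < Fintype.card V := by exact_mod_cast Fintype.card_pos
  have hW : ∑ u, ∑ v, eccMatR G u v = 2 * eccWiener G := by rw [eccWiener]; ring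
  have hpd := card_mul_graphDiam_le_sum_eccMatR hsc
  rw [hW] at hpd
  have hW0 : 0 ≤ eccWiener G := by
    linarith [mul_nonneg hp.le (Nat.cast_nonneg (α := ℝ) (graphDiam G))]
  have key := (eccMatR_isHermitian G).sum_abs_eigenvalues_le
    (b := 2 * eccWiener G / Fintype.card V)
    (by positivity) (by rw [hW, mul_div_cancel₀ _ hp.ne'])
    (by rw [trace_eccMatR_mul_self hsc, div_pow, mul_div_assoc', le_div_iff₀ (by positivity)]
        nlinarith [mul_le_mul_of_nonneg_left hpd hW0])
  rw [trace_eccMatR_mul_self hsc] at key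
  refine key.trans_eq ?_
  congr 2
  ring

end EccPaper
end

section
/- Let G be a connected graph. The line graph L(G) has diameter at most 2 if and only if G contains none of the following as an induced subgraph: F₁ = P₅, the path on 5 vertices; F₂, the graph obtained from a triangle by attaching a path of length 2 to one vertex; and F₃, the bowtie, i.e. the graph on 5 vertices consisting of two triangles sharing exactly one common vertex. -/
open Finset

namespace EccPaper

variable {V : Type*}

/-- F₂: a triangle with a pendant path of length 2 attached to one vertex. -/
def F2 : SimpleGraph (Fin 5) := SimpleGraph.fromRel (fun a b =>
  (a = 0 ∧ b = 1) ∨ (a = 0 ∧ b = 2) ∨ (a = 1 ∧ b = 2) ∨ (a = 2 ∧ b = 3) ∨ (a = 3 ∧ b = 4))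

/-- F₃: two triangles sharing exactly one common vertex. -/
def F3 : SimpleGraph (Fin 5) := SimpleGraph.fromRel (fun a b =>
  (a = 0 ∧ b = 1) ∨ (a = 0 ∧ b = 2) ∨ (a = 1 ∧ b = 2) ∨ (a = 2 ∧ b = 3) ∨ (a = 2 ∧ b = 4) ∨
  (a = 3 ∧ b = 4))


section AuxLemmas

open SimpleGraph

variable {W : Type*} {G : SimpleGraph W}

lemma embed5 (H : SimpleGraph (Fin 5)) (v : Fin 5 → W)
    (hne : ∀ i j : Fin 5, i < j → v i ≠ v j)
    (hiff : ∀ i j : Fin 5, i < j → (G.Adj (v i) (v j) ↔ H.Adj i j)) :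
    Nonempty (H ↪g G) := by
  have hinj : Function.Injective v := by
    intro i j h
    by_contra hij
    rcases lt_or_gt_of_ne hij with hl | hl
    · exact hne i j hl h
    · exact hne j i hl h.symm
  exact ⟨⟨⟨v, hinj⟩, by
    intro a b
    rcases lt_trichotomy a b with h | h | h
    · exact hiff a b h
    · subst h; exact iff_of_false (G.irrefl) (H.irrefl)
    · rw [G.adj_comm, H.adj_comm]; exact hiff b a h⟩⟩

lemma embedP5 (v0 v1 v2 v3 v4 : W)
    (h01 : G.Adj v0 v1) (h12 : G.Adj v1 v2) (h23 : G.Adj v2 v3) (h34 : G.Adj v3 v4)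
    (n02 : ¬G.Adj v0 v2) (n03 : ¬G.Adj v0 v3) (n04 : ¬G.Adj v0 v4)
    (n13 : ¬G.Adj v1 v3) (n14 : ¬G.Adj v1 v4) (n24 : ¬G.Adj v2 v4)
    (d02 : v0 ≠ v2) (d03 : v0 ≠ v3) (d04 : v0 ≠ v4) (d13 : v1 ≠ v3) (d14 : v1 ≠ v4)
    (d24 : v2 ≠ v4) :
    Nonempty (SimpleGraph.pathGraph 5 ↪g G) := by
  apply embed5 _ ![v0, v1, v2, v3, v4]
  · intro i j hij
    fin_cases i <;> fin_cases j <;>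
      first
        | exact absurd hij (by decide)
        | simp only [Matrix.cons_val_zero, Matrix.cons_val_one, Matrix.head_cons,
            Matrix.cons_val_two, Matrix.tail_cons, Matrix.cons_val_three,
            Matrix.cons_val_four] <;>
          first
            | assumption
            | exact h01.ne | exact h12.ne | exact h23.ne | exact h34.ne
  · intro i j hij
    fin_cases i <;> fin_cases j <;>
      first
        | exact absurd hij (by decide)
        | (simp only [Matrix.cons_val_zero, Matrix.cons_val_one, Matrix.head_cons,
            Matrix.cons_val_two, Matrix.tail_cons, Matrix.cons_val_three,
            Matrix.cons_val_four, SimpleGraph.pathGraph_adj]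
           first
            | exact iff_of_true (by assumption) (by decide)
            | exact iff_of_false (by assumption) (by decide))

lemma embedF2 (v0 v1 v2 v3 v4 : W)
    (h01 : G.Adj v0 v1) (h02 : G.Adj v0 v2) (h12 : G.Adj v1 v2) (h23 : G.Adj v2 v3)
    (h34 : G.Adj v3 v4)
    (n03 : ¬G.Adj v0 v3) (n04 : ¬G.Adj v0 v4) (n13 : ¬G.Adj v1 v3) (n14 : ¬G.Adj v1 v4)
    (n24 : ¬G.Adj v2 v4)
    (d03 : v0 ≠ v3) (d04 : v0 ≠ v4) (d13 : v1 ≠ v3) (d14 : v1 ≠ v4) (d24 : v2 ≠ v4) :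
    Nonempty (F2 ↪g G) := by
  apply embed5 _ ![v0, v1, v2, v3, v4]
  · intro i j hij
    fin_cases i <;> fin_cases j <;>
      first
        | exact absurd hij (by decide)
        | simp only [Matrix.cons_val_zero, Matrix.cons_val_one, Matrix.head_cons,
            Matrix.cons_val_two, Matrix.tail_cons, Matrix.cons_val_three,
            Matrix.cons_val_four] <;>
          first
            | assumption
            | exact h01.ne | exact h02.ne | exact h12.ne | exact h23.ne | exact h34.ne
  · intro i j hij
    fin_cases i <;> fin_cases j <;>
      first
        | exact absurd hij (by decide)
        | (simp only [Matrix.cons_val_zero, Matrix.cons_val_one, Matrix.head_cons,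
            Matrix.cons_val_two, Matrix.tail_cons, Matrix.cons_val_three,
            Matrix.cons_val_four, F2, SimpleGraph.fromRel_adj]
           first
            | exact iff_of_true (by assumption) (by decide)
            | exact iff_of_false (by assumption) (by decide))

lemma embedF3 (v0 v1 v2 v3 v4 : W)
    (h01 : G.Adj v0 v1) (h02 : G.Adj v0 v2) (h12 : G.Adj v1 v2) (h23 : G.Adj v2 v3)
    (h24 : G.Adj v2 v4) (h34 : G.Adj v3 v4)
    (n03 : ¬G.Adj v0 v3) (n04 : ¬G.Adj v0 v4) (n13 : ¬G.Adj v1 v3) (n14 : ¬G.Adj v1 v4)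
    (d03 : v0 ≠ v3) (d04 : v0 ≠ v4) (d13 : v1 ≠ v3) (d14 : v1 ≠ v4) :
    Nonempty (F3 ↪g G) := by
  apply embed5 _ ![v0, v1, v2, v3, v4]
  · intro i j hij
    fin_cases i <;> fin_cases j <;>
      first
        | exact absurd hij (by decide)
        | simp only [Matrix.cons_val_zero, Matrix.cons_val_one, Matrix.head_cons,
            Matrix.cons_val_two, Matrix.tail_cons, Matrix.cons_val_three,
            Matrix.cons_val_four] <;>
          first
            | assumption
            | exact h01.ne | exact h02.ne | exact h12.ne | exact h23.ne | exact h24.ne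
            | exact h34.ne
  · intro i j hij
    fin_cases i <;> fin_cases j <;>
      first
        | exact absurd hij (by decide)
        | (simp only [Matrix.cons_val_zero, Matrix.cons_val_one, Matrix.head_cons,
            Matrix.cons_val_two, Matrix.tail_cons, Matrix.cons_val_three,
            Matrix.cons_val_four, F3, SimpleGraph.fromRel_adj]
           first
            | exact iff_of_true (by assumption) (by decide)
            | exact iff_of_false (by assumption) (by decide))

lemma exists_adj_dist (hconn : G.Connected) {u c : W} {m : ℕ}
    (h : G.dist u c = m + 1) : ∃ w, G.Adj u w ∧ G.dist w c = m := by
  have hr : G.Reachable u c := Reachable.of_dist_ne_zero (by omega)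
  obtain ⟨p, hp⟩ := hr.exists_walk_length_eq_dist
  cases p with
  | nil => rw [h] at hp; simp at hp
  | @cons _ w _ hadj q =>
    refine ⟨w, hadj, ?_⟩
    have h1 : G.dist w c ≤ m := by
      have := G.dist_le q
      simp [Walk.length_cons, h] at hp
      omega
    have h2 : G.dist u c ≤ G.dist u w + G.dist w c := hconn.dist_triangle
    rw [dist_eq_one_iff_adj.mpr hadj] at h2
    omega

lemma adj_dist_le (hconn : G.Connected) {u w c : W} (h : G.Adj u w) :
    G.dist u c ≤ G.dist w c + 1 := by
  have h2 : G.dist u c ≤ G.dist u w + G.dist w c := hconn.dist_triangle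
  rw [dist_eq_one_iff_adj.mpr h] at h2
  omega

lemma key_asym (hconn : G.Connected) {a b c d : W}
    (hab : G.Adj a b) (hcd : G.Adj c d)
    (hac : ¬G.Adj a c) (had : ¬G.Adj a d) (hbc : ¬G.Adj b c) (hbd : ¬G.Adj b d)
    (nac : a ≠ c) (nad : a ≠ d) (nbc : b ≠ c) (nbd : b ≠ d)
    (hmin : G.dist a c ≤ G.dist b c) :
    Nonempty (SimpleGraph.pathGraph 5 ↪g G) ∨ Nonempty (F2 ↪g G) ∨ Nonempty (F3 ↪g G) := by
  have hr : G.Reachable a c := hconn a c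
  have hpos : 0 < G.dist a c := hr.pos_dist_of_ne nac
  have hne1 : G.dist a c ≠ 1 := fun h => hac (dist_eq_one_iff_adj.mp h)
  by_cases hn2 : G.dist a c = 2
  · obtain ⟨x, hax, hx1⟩ := exists_adj_dist hconn (show G.dist a c = 1 + 1 from hn2)
    have hxc : G.Adj x c := dist_eq_one_iff_adj.mp hx1
    have nxb : x ≠ b := fun h => hbc (h ▸ hxc)
    have nxd : x ≠ d := fun h => had (h ▸ hax)
    by_cases hbx : G.Adj b x <;> by_cases hxd : G.Adj x d
    · exact Or.inr (Or.inr (embedF3 a b x c d hab hax hbx hxc hxd hcd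
        hac had hbc hbd nac nad nbc nbd))
    · exact Or.inr (Or.inl (embedF2 a b x c d hab hax hbx hxc hcd
        hac had hbc hbd hxd nac nad nbc nbd nxd))
    · exact Or.inr (Or.inl (embedF2 d c x a b hcd.symm hxd.symm hxc.symm hax.symm hab
        (fun h => had h.symm) (fun h => hbd h.symm) (fun h => hac h.symm)
        (fun h => hbc h.symm) (fun h => hbx h.symm)
        (Ne.symm nad) (Ne.symm nbd) (Ne.symm nac) (Ne.symm nbc) nxb))
    · exact Or.inl (embedP5 b a x c d hab.symm hax hxc hcd
        (fun h => hbx h) hbc hbd hac had hxd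
        (Ne.symm nxb) nbc nbd nac nad (fun h => nxd h))
  · have h3 : 3 ≤ G.dist a c := by omega
    obtain ⟨m, hm⟩ : ∃ m, G.dist a c = m + 3 := ⟨G.dist a c - 3, by omega⟩
    obtain ⟨x1, hax1, hd1⟩ := exists_adj_dist hconn (show G.dist a c = (m + 2) + 1 from hm)
    obtain ⟨x2, h12, hd2⟩ := exists_adj_dist hconn (show G.dist x1 c = (m + 1) + 1 from hd1)
    obtain ⟨x3, h23, hd3⟩ := exists_adj_dist hconn (show G.dist x2 c = m + 1 from hd2)
    have nax2 : ¬G.Adj a x2 := fun h => by have := adj_dist_le (c := c) hconn h; omega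
    have nax3 : ¬G.Adj a x3 := fun h => by have := adj_dist_le (c := c) hconn h; omega
    have n13 : ¬G.Adj x1 x3 := fun h => by have := adj_dist_le (c := c) hconn h; omega
    have nbx2 : ¬G.Adj b x2 := fun h => by have := adj_dist_le (c := c) hconn h; omega
    have nbx3 : ¬G.Adj b x3 := fun h => by have := adj_dist_le (c := c) hconn h; omega
    have dax2 : a ≠ x2 := fun h => by rw [h] at hm; omega
    have dax3 : a ≠ x3 := fun h => by rw [h] at hm; omega
    have d13 : x1 ≠ x3 := fun h => by rw [h] at hd1; omega
    have dbx1 : b ≠ x1 := fun h => by rw [h] at hmin; omega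
    have dbx2 : b ≠ x2 := fun h => by rw [h] at hmin; omega
    have dbx3 : b ≠ x3 := fun h => by rw [h] at hmin; omega
    by_cases hbx1 : G.Adj b x1
    · exact Or.inr (Or.inl (embedF2 a b x1 x2 x3 hab hax1 hbx1 h12 h23
        nax2 nax3 nbx2 nbx3 n13 dax2 dax3 dbx2 dbx3 d13))
    · exact Or.inl (embedP5 b a x1 x2 x3 hab.symm hax1 h12 h23
        hbx1 nbx2 nbx3 nax2 nax3 n13 dbx1 dbx2 dbx3 dax2 dax3 d13)

lemma key (hconn : G.Connected) {a b c d : W}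
    (hab : G.Adj a b) (hcd : G.Adj c d)
    (hac : ¬G.Adj a c) (had : ¬G.Adj a d) (hbc : ¬G.Adj b c) (hbd : ¬G.Adj b d)
    (nac : a ≠ c) (nad : a ≠ d) (nbc : b ≠ c) (nbd : b ≠ d) :
    Nonempty (SimpleGraph.pathGraph 5 ↪g G) ∨ Nonempty (F2 ↪g G) ∨ Nonempty (F3 ↪g G) := by
  rcases le_total (G.dist a c) (G.dist b c) with h | h
  · exact key_asym hconn hab hcd hac had hbc hbd nac nad nbc nbd h
  · exact key_asym hconn hab.symm hcd hbc hbd hac had nbc nbd nac nad h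

lemma graphDiam_le_iff {X : Type*} [Fintype X] {G' : SimpleGraph X} {k : ℕ} :
    graphDiam G' ≤ k ↔ ∀ u v, G'.dist u v ≤ k := by
  unfold graphDiam ecc
  simp [Finset.sup_le_iff]

lemma line_reach_aux : ∀ {u v : W} (_ : G.Walk u v) (e f : G.edgeSet),
    u ∈ (e : Sym2 W) → v ∈ (f : Sym2 W) → G.lineGraph.Reachable e f := by
  intro u v w
  induction w with
  | nil =>
    intro e f hu hv
    by_cases hef : e = f
    · subst hef; exact Reachable.refl _
    · exact SimpleGraph.Adj.reachable
        (lineGraph_adj_iff_exists.mpr ⟨hef, _, hu, hv⟩)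
  | @cons u x v h p ih =>
    intro e f hu hv
    have hg : s(u, x) ∈ G.edgeSet := h
    have r1 : G.lineGraph.Reachable e ⟨s(u, x), hg⟩ := by
      by_cases hef : e = ⟨s(u, x), hg⟩
      · subst hef; exact Reachable.refl _
      · exact SimpleGraph.Adj.reachable
          (lineGraph_adj_iff_exists.mpr ⟨hef, u, hu, by simp⟩)
    exact r1.trans (ih ⟨s(u, x), hg⟩ f (by simp) hv)

lemma line_reach (hconn : G.Connected) (e f : G.edgeSet) :
    G.lineGraph.Reachable e f := by
  obtain ⟨e, he⟩ := e
  obtain ⟨f, hf⟩ := f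
  revert he hf
  induction e using Sym2.ind with | _ a b =>
  induction f using Sym2.ind with | _ c d =>
  intro he hf
  obtain ⟨w⟩ := hconn a c
  exact line_reach_aux w ⟨s(a, b), he⟩ ⟨s(c, d), hf⟩ (by simp) (by simp)

lemma bad_diam {W : Type*} [Fintype W] [DecidableEq W] {G : SimpleGraph W}
    [DecidableRel G.Adj] (hconn : G.Connected)
    {a b c d : W} (hab : G.Adj a b) (hcd : G.Adj c d)
    (hac : ¬G.Adj a c) (had : ¬G.Adj a d) (hbc : ¬G.Adj b c) (hbd : ¬G.Adj b d)
    (nac : a ≠ c) (nad : a ≠ d) (nbc : b ≠ c) (nbd : b ≠ d)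
    (hdiam : graphDiam G.lineGraph ≤ 2) : False := by
  rw [graphDiam_le_iff] at hdiam
  obtain ⟨e, he⟩ : ∃ e : G.edgeSet, (e : Sym2 W) = s(a, b) := ⟨⟨_, hab⟩, rfl⟩
  obtain ⟨f, hf⟩ : ∃ f : G.edgeSet, (f : Sym2 W) = s(c, d) := ⟨⟨_, hcd⟩, rfl⟩
  have hnef : e ≠ f := by
    intro h
    rw [h, hf] at he
    rw [Sym2.eq_iff] at he
    tauto
  have hreach := line_reach hconn e f
  have h0 : G.lineGraph.dist e f ≠ 0 :=
    dist_ne_zero_iff_ne_and_reachable.mpr ⟨hnef, hreach⟩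
  have h1 : G.lineGraph.dist e f ≠ 1 := by
    intro h1eq
    have hadj := dist_eq_one_iff_adj.mp h1eq
    obtain ⟨-, v, hv1, hv2⟩ := lineGraph_adj_iff_exists.mp hadj
    simp only [he, hf, Sym2.mem_iff] at hv1 hv2
    rcases hv1 with rfl | rfl <;> rcases hv2 with rfl | rfl <;> tauto
  have h2 : G.lineGraph.dist e f = 2 := by
    have := hdiam e f; omega
  obtain ⟨p, hp⟩ := hreach.exists_walk_length_eq_dist
  rw [h2] at hp
  cases p with
  | nil => simp at hp
  | @cons _ g _ hadj q =>
    cases q with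
    | nil => simp at hp
    | @cons _ g' _ hadj' q' =>
      simp only [Walk.length_cons] at hp
      have : q'.length = 0 := by omega
      have hgf := (Walk.eq_of_length_eq_zero this) ▸ hadj'
      obtain ⟨-, v, hv1, hv2⟩ := lineGraph_adj_iff_exists.mp hadj
      obtain ⟨-, w, hw1, hw2⟩ := lineGraph_adj_iff_exists.mp hgf
      simp only [he, hf, Sym2.mem_iff] at hv1 hw2
      have hvw : v ≠ w := by
        rcases hv1 with rfl | rfl <;> rcases hw2 with rfl | rfl <;> assumption
      have hgeq : (g : Sym2 W) = s(v, w) := (Sym2.mem_and_mem_iff hvw).mp ⟨hv2, hw1⟩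
      have hadjvw : G.Adj v w := by
        have := g.prop
        rw [hgeq] at this
        exact this
      rcases hv1 with rfl | rfl <;> rcases hw2 with rfl | rfl <;> tauto

lemma dist_le_two_of_mid {e f : G.edgeSet} (g : G.edgeSet)
    (h1 : G.lineGraph.Adj e g) (h2 : G.lineGraph.Adj g f) :
    G.lineGraph.dist e f ≤ 2 := by
  have := G.lineGraph.dist_le (SimpleGraph.Walk.cons h1 h2.toWalk)
  simpa using this

end AuxLemmas

/-- diam(L(G)) ≤ 2 iff G has no induced F₁ = P₅, F₂ or F₃. -/
theorem stmt_19 {V : Type*} [Fintype V] [DecidableEq V] (G : SimpleGraph V) [DecidableRel G.Adj]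
    (hconn : G.Connected) :
    graphDiam G.lineGraph ≤ 2 ↔
      (IsEmpty (SimpleGraph.pathGraph 5 ↪g G) ∧ IsEmpty (F2 ↪g G) ∧ IsEmpty (F3 ↪g G)) := by
  constructor
  · intro hdiam
    refine ⟨⟨fun φ => ?_⟩, ⟨fun φ => ?_⟩, ⟨fun φ => ?_⟩⟩
    · have e01 : (SimpleGraph.pathGraph 5).Adj 0 1 := by
        rw [SimpleGraph.pathGraph_adj]; decide
      have e34 : (SimpleGraph.pathGraph 5).Adj 3 4 := by
        rw [SimpleGraph.pathGraph_adj]; decide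
      have n03 : ¬(SimpleGraph.pathGraph 5).Adj 0 3 := by
        rw [SimpleGraph.pathGraph_adj]; decide
      have n04 : ¬(SimpleGraph.pathGraph 5).Adj 0 4 := by
        rw [SimpleGraph.pathGraph_adj]; decide
      have n13 : ¬(SimpleGraph.pathGraph 5).Adj 1 3 := by
        rw [SimpleGraph.pathGraph_adj]; decide
      have n14 : ¬(SimpleGraph.pathGraph 5).Adj 1 4 := by
        rw [SimpleGraph.pathGraph_adj]; decide
      exact bad_diam hconn (φ.map_adj_iff.mpr e01) (φ.map_adj_iff.mpr e34)
        (fun h => n03 (φ.map_adj_iff.mp h)) (fun h => n04 (φ.map_adj_iff.mp h))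
        (fun h => n13 (φ.map_adj_iff.mp h)) (fun h => n14 (φ.map_adj_iff.mp h))
        (φ.injective.ne (by decide)) (φ.injective.ne (by decide))
        (φ.injective.ne (by decide)) (φ.injective.ne (by decide)) hdiam
    · have e01 : F2.Adj 0 1 := by
        simp only [F2, SimpleGraph.fromRel_adj]; decide
      have e34 : F2.Adj 3 4 := by
        simp only [F2, SimpleGraph.fromRel_adj]; decide
      have n03 : ¬F2.Adj 0 3 := by
        simp only [F2, SimpleGraph.fromRel_adj]; decide
      have n04 : ¬F2.Adj 0 4 := by
        simp only [F2, SimpleGraph.fromRel_adj]; decide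
      have n13 : ¬F2.Adj 1 3 := by
        simp only [F2, SimpleGraph.fromRel_adj]; decide
      have n14 : ¬F2.Adj 1 4 := by
        simp only [F2, SimpleGraph.fromRel_adj]; decide
      exact bad_diam hconn (φ.map_adj_iff.mpr e01) (φ.map_adj_iff.mpr e34)
        (fun h => n03 (φ.map_adj_iff.mp h)) (fun h => n04 (φ.map_adj_iff.mp h))
        (fun h => n13 (φ.map_adj_iff.mp h)) (fun h => n14 (φ.map_adj_iff.mp h))
        (φ.injective.ne (by decide)) (φ.injective.ne (by decide))
        (φ.injective.ne (by decide)) (φ.injective.ne (by decide)) hdiam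
    · have e01 : F3.Adj 0 1 := by
        simp only [F3, SimpleGraph.fromRel_adj]; decide
      have e34 : F3.Adj 3 4 := by
        simp only [F3, SimpleGraph.fromRel_adj]; decide
      have n03 : ¬F3.Adj 0 3 := by
        simp only [F3, SimpleGraph.fromRel_adj]; decide
      have n04 : ¬F3.Adj 0 4 := by
        simp only [F3, SimpleGraph.fromRel_adj]; decide
      have n13 : ¬F3.Adj 1 3 := by
        simp only [F3, SimpleGraph.fromRel_adj]; decide
      have n14 : ¬F3.Adj 1 4 := by
        simp only [F3, SimpleGraph.fromRel_adj]; decide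
      exact bad_diam hconn (φ.map_adj_iff.mpr e01) (φ.map_adj_iff.mpr e34)
        (fun h => n03 (φ.map_adj_iff.mp h)) (fun h => n04 (φ.map_adj_iff.mp h))
        (fun h => n13 (φ.map_adj_iff.mp h)) (fun h => n14 (φ.map_adj_iff.mp h))
        (φ.injective.ne (by decide)) (φ.injective.ne (by decide))
        (φ.injective.ne (by decide)) (φ.injective.ne (by decide)) hdiam
  · rintro ⟨h1, h2, h3⟩
    rw [graphDiam_le_iff]
    rintro ⟨e, he⟩ ⟨f, hf⟩
    revert he hf
    induction e using Sym2.ind with | _ a b =>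
    induction f using Sym2.ind with | _ c d =>
    intro he hf
    have hab : G.Adj a b := he
    have hcd : G.Adj c d := hf
    by_cases hshare : a = c ∨ a = d ∨ b = c ∨ b = d
    · by_cases heq : (⟨s(a, b), he⟩ : G.edgeSet) = ⟨s(c, d), hf⟩
      · rw [heq, SimpleGraph.dist_self]; omega
      · have hadj : G.lineGraph.Adj ⟨s(a, b), he⟩ ⟨s(c, d), hf⟩ := by
          rw [SimpleGraph.lineGraph_adj_iff_exists]
          refine ⟨heq, ?_⟩
          rcases hshare with rfl | rfl | rfl | rfl
          · exact ⟨a, by simp, by simp⟩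
          · exact ⟨a, by simp, by simp⟩
          · exact ⟨b, by simp, by simp⟩
          · exact ⟨b, by simp, by simp⟩
        have := SimpleGraph.dist_eq_one_iff_adj.mpr hadj
        omega
    · push_neg at hshare
      obtain ⟨nac, nad, nbc, nbd⟩ := hshare
      have hnab : a ≠ b := hab.ne
      have hncd : c ≠ d := hcd.ne
      by_cases hcr : G.Adj a c ∨ G.Adj a d ∨ G.Adj b c ∨ G.Adj b d
      · rcases hcr with h | h | h | h
        · refine dist_le_two_of_mid ⟨s(a, c), h⟩ ?_ ?_ <;>
            rw [SimpleGraph.lineGraph_adj_iff_exists]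
          · refine ⟨?_, a, by simp, by simp⟩
            intro hh; have hh := congrArg Subtype.val hh; simp only [Sym2.eq_iff] at hh; tauto
          · refine ⟨?_, c, by simp, by simp⟩
            intro hh; have hh := congrArg Subtype.val hh; simp only [Sym2.eq_iff] at hh; tauto
        · refine dist_le_two_of_mid ⟨s(a, d), h⟩ ?_ ?_ <;>
            rw [SimpleGraph.lineGraph_adj_iff_exists]
          · refine ⟨?_, a, by simp, by simp⟩
            intro hh; have hh := congrArg Subtype.val hh; simp only [Sym2.eq_iff] at hh; tauto
          · refine ⟨?_, d, by simp, by simp⟩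
            intro hh; have hh := congrArg Subtype.val hh; simp only [Sym2.eq_iff] at hh; tauto
        · refine dist_le_two_of_mid ⟨s(b, c), h⟩ ?_ ?_ <;>
            rw [SimpleGraph.lineGraph_adj_iff_exists]
          · refine ⟨?_, b, by simp, by simp⟩
            intro hh; have hh := congrArg Subtype.val hh; simp only [Sym2.eq_iff] at hh; tauto
          · refine ⟨?_, c, by simp, by simp⟩
            intro hh; have hh := congrArg Subtype.val hh; simp only [Sym2.eq_iff] at hh; tauto
        · refine dist_le_two_of_mid ⟨s(b, d), h⟩ ?_ ?_ <;>
            rw [SimpleGraph.lineGraph_adj_iff_exists]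
          · refine ⟨?_, b, by simp, by simp⟩
            intro hh; have hh := congrArg Subtype.val hh; simp only [Sym2.eq_iff] at hh; tauto
          · refine ⟨?_, d, by simp, by simp⟩
            intro hh; have hh := congrArg Subtype.val hh; simp only [Sym2.eq_iff] at hh; tauto
      · push_neg at hcr
        obtain ⟨hac, had, hbc, hbd⟩ := hcr
        exfalso
        rcases key hconn hab hcd hac had hbc hbd nac nad nbc nbd with ⟨φ⟩ | ⟨φ⟩ | ⟨φ⟩
        · exact h1.false φ.some
        · exact h2.false φ.some
        · exact h3.false φ.some

end EccPaper
end
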